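/- arXiv:2411.08273 — 4 statements merged into one kernel-verified Lean document; each statement's English description precedes it below -/
import Mathlib

section
/- Let σ > 0, r > 0, and b ≥ 1. Suppose X, Y, Z : ℝ → ℝ are differentiable and satisfy the Lorenz system X' = −σX + σY, Y' = −σX − Y − XZ, Z' = −bZ + XY − b(r+σ), and suppose y, z : ℝ → ℝ are differentiable and satisfy the X-observed synchronization system y' = −σX − y − Xz, z' = −bz + Xy − b(r+σ) (with the same function X). Then for all t ≥ 0: (Y(t) − y(t))² + (Z(t) − z(t))² ≤ ((Y(0) − y(0))² + (Z(0) − z(0))²) · e^{−2t}. -/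
/-!
The synchronization error `(u, v) = (Y - y, Z - z)` obeys the linear system
`u' = -u - X v`, `v' = -b v + X u`, in which the observed signal `X` only rotates the error.
Hence the energy `E = u² + v²` satisfies `E' = -2u² - 2b v² ≤ -2E` for `b ≥ 1`,
so `E t · e^{2t}` is nonincreasing.
-/

open Real

theorem le_mul_exp_of_hasDerivAt_le_neg_mul {f f' : ℝ → ℝ} {k : ℝ}
    (hf : ∀ t, HasDerivAt f (f' t) t) (hle : ∀ t, f' t ≤ -k * f t) {a t : ℝ} (hat : a ≤ t) :
    f t ≤ f a * exp (-k * (t - a)) := by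
  set g : ℝ → ℝ := fun s => f s * exp (k * s)
  have hg : ∀ s, HasDerivAt g ((f' s + k * f s) * exp (k * s)) s := fun s => by
    have hexp : HasDerivAt (fun s => exp (k * s)) (exp (k * s) * k) s := by
      simpa using ((hasDerivAt_id s).const_mul k).exp
    exact ((hf s).mul hexp).congr_deriv (by ring)
  have hanti : Antitone g := antitone_of_deriv_nonpos (fun s => (hg s).differentiableAt)
    fun s => (hg s).deriv ▸
      mul_nonpos_of_nonpos_of_nonneg (by linarith [hle s]) (exp_pos _).le
  have hga : f t * exp (k * t) ≤ f a * exp (k * a) := hanti hat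
  calc f t = f t * exp (k * t) * exp (-k * t) := by
        rw [mul_assoc, ← exp_add, neg_mul, add_neg_cancel, exp_zero, mul_one]
    _ ≤ f a * exp (k * a) * exp (-k * t) := by gcongr
    _ = f a * exp (-k * (t - a)) := by rw [mul_assoc, ← exp_add]; ring_nf

theorem sq_add_sq_le_mul_exp_of_rotation_damped {u v w : ℝ → ℝ} {b : ℝ} (hb : 1 ≤ b)
    (hu : ∀ t, HasDerivAt u (-u t - w t * v t) t)
    (hv : ∀ t, HasDerivAt v (-b * v t + w t * u t) t) {a t : ℝ} (hat : a ≤ t) :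
    u t ^ 2 + v t ^ 2 ≤ (u a ^ 2 + v a ^ 2) * exp (-2 * (t - a)) := by
  have hE : ∀ s, HasDerivAt (fun s => u s ^ 2 + v s ^ 2) (-2 * u s ^ 2 - 2 * b * v s ^ 2) s :=
    fun s => (((hu s).pow 2).add ((hv s).pow 2)).congr_deriv (by ring)
  refine le_mul_exp_of_hasDerivAt_le_neg_mul hE (fun s => ?_) hat
  nlinarith [sq_nonneg (v s)]

theorem lorenz_X_observed_synchronization_general
    (σ r b : ℝ) (hb : 1 ≤ b)
    (X Y Z y z : ℝ → ℝ)
    (hY : ∀ t, HasDerivAt Y (-σ * X t - Y t - X t * Z t) t)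
    (hZ : ∀ t, HasDerivAt Z (-b * Z t + X t * Y t - b * (r + σ)) t)
    (hy : ∀ t, HasDerivAt y (-σ * X t - y t - X t * z t) t)
    (hz : ∀ t, HasDerivAt z (-b * z t + X t * y t - b * (r + σ)) t) :
    ∀ t ≥ (0 : ℝ), (Y t - y t) ^ 2 + (Z t - z t) ^ 2 ≤
      ((Y 0 - y 0) ^ 2 + (Z 0 - z 0) ^ 2) * Real.exp (-2 * t) := by
  intro t ht
  have hu : ∀ s, HasDerivAt (fun s => Y s - y s) (-(Y s - y s) - X s * (Z s - z s)) s :=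
    fun s => ((hY s).sub (hy s)).congr_deriv (by ring)
  have hv : ∀ s, HasDerivAt (fun s => Z s - z s) (-b * (Z s - z s) + X s * (Y s - y s)) s :=
    fun s => ((hZ s).sub (hz s)).congr_deriv (by ring)
  simpa using sq_add_sq_le_mul_exp_of_rotation_damped hb hu hv ht

/-- For the Lorenz 1963 system (shifted form) with `σ > 0`, `r > 0`,
`b ≥ 1`, the X-observed synchronization system `y' = -σX - y - Xz`,
`z' = -bz + Xy - b(r+σ)` satisfies, for all `t ≥ 0`,
`(Y-y)² + (Z-z)² ≤ ((Y₀-y₀)² + (Z₀-z₀)²) e^{-2t}`. -/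
theorem lorenz_X_observed_synchronization
    (σ r b : ℝ) (hσ : 0 < σ) (hr : 0 < r) (hb : 1 ≤ b)
    (X Y Z y z : ℝ → ℝ)
    (hX : ∀ t, HasDerivAt X (-σ * X t + σ * Y t) t)
    (hY : ∀ t, HasDerivAt Y (-σ * X t - Y t - X t * Z t) t)
    (hZ : ∀ t, HasDerivAt Z (-b * Z t + X t * Y t - b * (r + σ)) t)
    (hy : ∀ t, HasDerivAt y (-σ * X t - y t - X t * z t) t)
    (hz : ∀ t, HasDerivAt z (-b * z t + X t * y t - b * (r + σ)) t) :
    ∀ t ≥ (0 : ℝ), (Y t - y t) ^ 2 + (Z t - z t) ^ 2 ≤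
      ((Y 0 - y 0) ^ 2 + (Z 0 - z 0) ^ 2) * Real.exp (-2 * t) :=
  lorenz_X_observed_synchronization_general σ r b hb X Y Z y z hY hZ hy hz
end

section
/- Let b > 0 and let e_Y, e_Z, X : ℝ → ℝ be differentiable functions satisfying the error equations e_Y' = −e_Y − X·e_Z and e_Z' = −b·e_Z + X·e_Y. Then the energy identity d/dt (e_Y² + e_Z²) = −2e_Y² − 2b·e_Z² holds at every time, and consequently for all t ≥ 0: e_Y(t)² + e_Z(t)² ≤ (e_Y(0)² + e_Z(0)²) · e^{−2·min(1,b)·t}. -/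
/-! In `d/dt (e_Y² + e_Z²) = 2 e_Y e_Y' + 2 e_Z e_Z'` the terms `∓ 2 X e_Y e_Z` cancel, and the
remaining `-2 e_Y² - 2 b e_Z²` is at most `-2 min(1, b) (e_Y² + e_Z²)`; Grönwall's inequality
then gives the exponential decay. -/

open Real

theorem le_mul_exp_of_hasDerivAt_le_mul {f f' : ℝ → ℝ} {K : ℝ}
    (hf : ∀ t, HasDerivAt f (f' t) t) (hbound : ∀ t, f' t ≤ K * f t) {t : ℝ} (ht : 0 ≤ t) :
    f t ≤ f 0 * exp (K * t) := by
  have hcont : Continuous f := continuous_iff_continuousAt.2 fun s => (hf s).continuousAt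
  have h := le_gronwallBound_of_liminf_deriv_right_le (ε := 0) hcont.continuousOn
    (fun s _ _ hr => (hf s).hasDerivWithinAt.liminf_right_slope_le hr) le_rfl
    (fun s _ => (add_zero (K * f s)).symm ▸ hbound s) t ⟨ht, le_rfl⟩
  rwa [sub_zero, gronwallBound_ε0] at h

theorem hasDerivAt_sq_add_sq {f g : ℝ → ℝ} {f' g' t : ℝ}
    (hf : HasDerivAt f f' t) (hg : HasDerivAt g g' t) :
    HasDerivAt (fun s => f s ^ 2 + g s ^ 2) (2 * f t * f' + 2 * g t * g') t :=
  ((hf.fun_pow 2).fun_add (hg.fun_pow 2)).congr_deriv (by norm_num)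

theorem neg_two_mul_sq_sub_le (b x y : ℝ) :
    -2 * x ^ 2 - 2 * b * y ^ 2 ≤ -2 * min 1 b * (x ^ 2 + y ^ 2) := by
  nlinarith [min_le_left 1 b, min_le_right 1 b, sq_nonneg x, sq_nonneg y]

theorem lorenz_error_energy_decay_general
    (b : ℝ) (eY eZ X : ℝ → ℝ)
    (hY : ∀ t, HasDerivAt eY (-eY t - X t * eZ t) t)
    (hZ : ∀ t, HasDerivAt eZ (-b * eZ t + X t * eY t) t) :
    (∀ t : ℝ, HasDerivAt (fun s => eY s ^ 2 + eZ s ^ 2)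
        (-2 * eY t ^ 2 - 2 * b * eZ t ^ 2) t) ∧
      ∀ t ≥ (0 : ℝ), eY t ^ 2 + eZ t ^ 2 ≤
        (eY 0 ^ 2 + eZ 0 ^ 2) * Real.exp (-2 * min 1 b * t) := by
  have hV : ∀ t : ℝ, HasDerivAt (fun s => eY s ^ 2 + eZ s ^ 2)
      (-2 * eY t ^ 2 - 2 * b * eZ t ^ 2) t := fun t =>
    (hasDerivAt_sq_add_sq (hY t) (hZ t)).congr_deriv (by ring)
  exact ⟨hV, fun t ht =>
    le_mul_exp_of_hasDerivAt_le_mul hV (fun s => neg_two_mul_sq_sub_le b (eY s) (eZ s)) ht⟩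

/-- For `b > 0`, the error equations `e_Y' = -e_Y - X e_Z`,
`e_Z' = -b e_Z + X e_Y` satisfy the energy identity
`d/dt (e_Y² + e_Z²) = -2 e_Y² - 2 b e_Z²` at every time, and consequently for all
`t ≥ 0`, `e_Y(t)² + e_Z(t)² ≤ (e_Y(0)² + e_Z(0)²) e^{-2 min(1,b) t}`. -/
theorem lorenz_error_energy_decay
    (b : ℝ) (hb : 0 < b) (eY eZ X : ℝ → ℝ)
    (hY : ∀ t, HasDerivAt eY (-eY t - X t * eZ t) t)
    (hZ : ∀ t, HasDerivAt eZ (-b * eZ t + X t * eY t) t) :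
    (∀ t : ℝ, HasDerivAt (fun s => eY s ^ 2 + eZ s ^ 2)
        (-2 * eY t ^ 2 - 2 * b * eZ t ^ 2) t) ∧
      ∀ t ≥ (0 : ℝ), eY t ^ 2 + eZ t ^ 2 ≤
        (eY 0 ^ 2 + eZ 0 ^ 2) * Real.exp (-2 * min 1 b * t) :=
  lorenz_error_energy_decay_general b eY eZ X hY hZ
end

section
/- Let σ > 0, b > 0 with b ≠ σ, and J ≥ 0. Suppose X, Y, Z : ℝ → ℝ are differentiable and satisfy the Lorenz system X' = −σX + σY, Y' = −σX − Y − XZ, Z' = −bZ + XY − b(r+σ) for some r ∈ ℝ, suppose |Y(t)| ≤ √J for all t ≥ 0, and suppose x, z : ℝ → ℝ are differentiable and satisfy the Y-observed synchronization system x' = −σx + σY, z' = −bz + xY − b(r+σ). Then for all t ≥ 0: |Z(t) − z(t)| ≤ |Z(0) − z(0)|·e^{−bt} + √J·|X(0) − x(0)|·(e^{−σt} − e^{−bt})/(b − σ). -/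
/-!
The state error `X - x` obeys `(X - x)' = -σ (X - x)`, so it decays like `e^{-σt}`. The error
`e = Z - z` then solves the linear equation `e' = -b e + Y (X - x)` whose forcing term is at most
`√J |X(0) - x(0)| e^{-σt}`. After the integrating factor `e^{bt}`, the derivative of `e(t) e^{bt}`
is bounded by that of `|e(0)| + √J |X(0) - x(0)| (e^{(b-σ)t} - 1)/(b - σ)`, and the fencing
theorem for derivative bounds gives the estimate.
-/

open Real Set

theorem eq_mul_exp_of_hasDerivAt {a : ℝ} {u : ℝ → ℝ} (hu : ∀ t, HasDerivAt u (a * u t) t)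
    (t : ℝ) : u t = u 0 * exp (a * t) := by
  have hderiv : ∀ s, HasDerivAt (fun s => u s * exp (-a * s)) 0 s := fun s =>
    ((hu s).mul ((hasDerivAt_id' s).const_mul (-a)).exp).congr_deriv (by ring)
  have hconst := is_const_of_deriv_eq_zero (fun s => (hderiv s).differentiableAt)
    (fun s => (hderiv s).deriv) t 0
  simp only [mul_zero, exp_zero, mul_one] at hconst
  rw [← hconst, mul_assoc, ← exp_add]
  simp

theorem hasDerivAt_mul_exp_of_hasDerivAt_linear {b : ℝ} {e f : ℝ → ℝ} {s : ℝ}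
    (he : HasDerivAt e (-b * e s + f s) s) :
    HasDerivAt (fun s => e s * exp (b * s)) (f s * exp (b * s)) s :=
  (he.mul ((hasDerivAt_id' s).const_mul b).exp).congr_deriv (by ring)

theorem abs_le_of_hasDerivAt_linear_of_abs_forcing_le {b σ K : ℝ} (hbσ : b ≠ σ) {e f : ℝ → ℝ}
    (he : ∀ s, HasDerivAt e (-b * e s + f s) s)
    (hf : ∀ s ≥ 0, |f s| ≤ K * exp (-σ * s)) :
    ∀ t ≥ 0, |e t| ≤ |e 0| * exp (-b * t) + K * (exp (-σ * t) - exp (-b * t)) / (b - σ) := by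
  intro t ht
  have hc : b - σ ≠ 0 := sub_ne_zero.mpr hbσ
  set B : ℝ → ℝ := fun s => |e 0| + K * (exp ((b - σ) * s) - 1) / (b - σ)
  have hB : ∀ s, HasDerivAt B (K * exp ((b - σ) * s)) s := fun s =>
    ((((hasDerivAt_id' s).const_mul (b - σ)).exp.sub_const 1).const_mul K).div_const (b - σ)
      |>.const_add |e 0| |>.congr_deriv (by field_simp)
  have hg := fun s => hasDerivAt_mul_exp_of_hasDerivAt_linear (he s)
  have hg_le : ∀ s ∈ Ico 0 t, ‖f s * exp (b * s)‖ ≤ K * exp ((b - σ) * s) := fun s hs => by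
    rw [Real.norm_eq_abs, abs_mul, abs_of_pos (exp_pos _)]
    calc |f s| * exp (b * s) ≤ K * exp (-σ * s) * exp (b * s) := by
          gcongr; exact hf s hs.1
      _ = K * exp ((b - σ) * s) := by rw [mul_assoc, ← exp_add]; ring_nf
  have hbound := image_norm_le_of_norm_deriv_right_le_deriv_boundary
    (fun s _ => (hg s).continuousAt.continuousWithinAt) (fun s _ => (hg s).hasDerivWithinAt)
    (by simp [B]) hB hg_le ⟨ht, le_rfl⟩
  have hexp : exp ((b - σ) * t) * exp (-b * t) = exp (-σ * t) := by
    rw [← exp_add]; ring_nf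
  calc |e t| = |e t * exp (b * t)| * exp (-b * t) := by
        rw [abs_mul, abs_of_pos (exp_pos _), mul_assoc, ← exp_add]; simp
    _ ≤ B t * exp (-b * t) := by gcongr; exact hbound
    _ = _ := by linear_combination K / (b - σ) * hexp

theorem lorenz_Y_observed_Z_error_bound_general
    (σ b J r : ℝ) (hbσ : b ≠ σ)
    (X Y Z x z : ℝ → ℝ)
    (hX : ∀ t, HasDerivAt X (-σ * X t + σ * Y t) t)
    (hZ : ∀ t, HasDerivAt Z (-b * Z t + X t * Y t - b * (r + σ)) t)
    (hYbound : ∀ t ≥ (0 : ℝ), |Y t| ≤ Real.sqrt J)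
    (hx : ∀ t, HasDerivAt x (-σ * x t + σ * Y t) t)
    (hz : ∀ t, HasDerivAt z (-b * z t + x t * Y t - b * (r + σ)) t) :
    ∀ t ≥ (0 : ℝ), |Z t - z t| ≤
      |Z 0 - z 0| * Real.exp (-b * t) +
        Real.sqrt J * |X 0 - x 0| *
          (Real.exp (-σ * t) - Real.exp (-b * t)) / (b - σ) := by
  have hXx : ∀ t, X t - x t = (X 0 - x 0) * exp (-σ * t) :=
    eq_mul_exp_of_hasDerivAt fun t => ((hX t).sub (hx t)).congr_deriv (by ring)
  refine abs_le_of_hasDerivAt_linear_of_abs_forcing_le hbσ (f := fun s => Y s * (X s - x s))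
    (fun s => ((hZ s).sub (hz s)).congr_deriv (by ring)) fun s hs => ?_
  rw [hXx, abs_mul, abs_mul, abs_of_pos (exp_pos _), ← mul_assoc]
  gcongr
  exact hYbound s hs

/-- For the Lorenz 1963 system with `σ > 0`, `b > 0`, `b ≠ σ`, and
a uniform bound `|Y(t)| ≤ √J` (`J ≥ 0`) for `t ≥ 0`, the Y-observed
synchronization system `x' = -σx + σY`, `z' = -bz + xY - b(r+σ)` satisfies, for
all `t ≥ 0`,
`|Z(t) - z(t)| ≤ |Z(0) - z(0)| e^{-bt} + √J |X(0) - x(0)| (e^{-σt} - e^{-bt})/(b - σ)`. -/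
theorem lorenz_Y_observed_Z_error_bound
    (σ b J r : ℝ) (hσ : 0 < σ) (hb : 0 < b) (hbσ : b ≠ σ) (hJ : 0 ≤ J)
    (X Y Z x z : ℝ → ℝ)
    (hX : ∀ t, HasDerivAt X (-σ * X t + σ * Y t) t)
    (hY : ∀ t, HasDerivAt Y (-σ * X t - Y t - X t * Z t) t)
    (hZ : ∀ t, HasDerivAt Z (-b * Z t + X t * Y t - b * (r + σ)) t)
    (hYbound : ∀ t ≥ (0 : ℝ), |Y t| ≤ Real.sqrt J)
    (hx : ∀ t, HasDerivAt x (-σ * x t + σ * Y t) t)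
    (hz : ∀ t, HasDerivAt z (-b * z t + x t * Y t - b * (r + σ)) t) :
    ∀ t ≥ (0 : ℝ), |Z t - z t| ≤
      |Z 0 - z 0| * Real.exp (-b * t) +
        Real.sqrt J * |X 0 - x 0| *
          (Real.exp (-σ * t) - Real.exp (-b * t)) / (b - σ) :=
  lorenz_Y_observed_Z_error_bound_general σ b J r hbσ X Y Z x z hX hZ hYbound hx hz
end

section
/- Fix t ∈ ℝ, Z₀, z₀ ∈ ℝ with z₀ ≠ Z₀, and functions X, Y : ℝ → ℝ. Let Z : ℝ → ℝ satisfy Z' = XY with Z(0) = Z₀, and let z̃ : ℝ → ℝ satisfy z̃' = XY with z̃(0) = z₀ (the b = 0 synchronized system with X and Y observed). Suppose for each μ > 0 we are given functions x_μ, y_μ, z_μ : ℝ → ℝ such that z_μ(t) → z̃(t) as μ → ∞. Then liminf_{μ→∞} ‖(X(t) − x_μ(t), Y(t) − y_μ(t), Z(t) − z_μ(t))‖_{ℓ²} ≥ |z₀ − Z₀| > 0. -/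
open Filter Topology

/-! The difference `z̃ - Z` of two solutions of `w' = XY` has zero derivative, so it is the constant
`z₀ - Z₀`. Hence `|Z(t) - z_μ(t)| → |z₀ - Z₀|` as `z_μ(t) → z̃(t)`, and the ℓ² error dominates
its third component. -/

theorem sub_eq_sub_of_hasDerivAt_eq {𝕜 G : Type*} [RCLike 𝕜] [NormedAddCommGroup G]
    [NormedSpace 𝕜 G] {f g f' : 𝕜 → G} (hf : ∀ x, HasDerivAt f (f' x) x)
    (hg : ∀ x, HasDerivAt g (f' x) x) (x y : 𝕜) : f x - g x = f y - g y := by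
  have hfg : ∀ x, HasDerivAt (f - g) 0 x := fun x => by
    simpa using (hf x).sub (hg x)
  exact is_const_of_deriv_eq_zero (fun x => (hfg x).differentiableAt) (fun x => (hfg x).deriv) x y

/-- Fix a time `t`, initial values `Z₀ ≠ z₀`, and let `Z`, `z̃`
solve `w' = XY` with `Z(0) = Z₀`, `z̃(0) = z₀` (the `b = 0` synchronization
system with `X` and `Y` observed).  If for each nudging parameter `μ` the nudged
solutions satisfy `z_μ(t) → z̃(t)` as `μ → ∞`, then
`liminf_{μ→∞} ‖(X(t)-x_μ(t), Y(t)-y_μ(t), Z(t)-z_μ(t))‖_{ℓ²} ≥ |z₀ - Z₀| > 0`,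
stated here in the equivalent eventual form: for every `ε > 0`, eventually in
`μ` the ℓ² error is at least `|z₀ - Z₀| - ε`. -/
theorem lorenz_nudged_error_liminf_lower_bound
    (t Z₀ z₀ : ℝ) (hne : z₀ ≠ Z₀) (X Y Z ztil : ℝ → ℝ)
    (hZ : ∀ s, HasDerivAt Z (X s * Y s) s) (hZ0 : Z 0 = Z₀)
    (hztil : ∀ s, HasDerivAt ztil (X s * Y s) s) (hztil0 : ztil 0 = z₀)
    (x y z : ℝ → ℝ → ℝ)
    (hconv : Tendsto (fun μ : ℝ => z μ t) atTop (nhds (ztil t))) :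
    (∀ ε > (0 : ℝ), ∀ᶠ μ : ℝ in atTop,
        |z₀ - Z₀| - ε ≤
          Real.sqrt ((X t - x μ t) ^ 2 + (Y t - y μ t) ^ 2 + (Z t - z μ t) ^ 2)) ∧
      0 < |z₀ - Z₀| := by
  refine ⟨fun ε hε => ?_, abs_pos.mpr (sub_ne_zero.mpr hne)⟩
  have hgap : Z t - ztil t = Z₀ - z₀ := by
    simpa [hZ0, hztil0] using sub_eq_sub_of_hasDerivAt_eq hZ hztil t 0
  have hlim : Tendsto (fun μ => |Z t - z μ t|) atTop (𝓝 |z₀ - Z₀|) := by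
    rw [abs_sub_comm, ← hgap]
    exact (hconv.const_sub (Z t)).abs
  filter_upwards [hlim.eventually_const_lt (sub_lt_self _ hε)] with μ hμ
  exact hμ.le.trans (Real.abs_le_sqrt (le_add_of_nonneg_left (by positivity)))
end
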